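/- For every m >= 1, the binary partial word w(m) = 0^m (1 ?^{m-1})^{m-1} 1 is nonoverlapping, has length m^2 + 1, and under the fair-coin measure P(w(m)) = 2^{-2m}. -/

import Mathlib

/-!
Two occurrences of realizations of `w(m)` at positions `i < j` of a string shorter than
`2 |w(m)|` have shift `d = j - i` with `1 ≤ d ≤ m²`. For `t = ⌈d / m⌉` the position
`p = t m - d < m` carries a `0` in `w(m)` while `p + d = t m` carries a `1`, so the two
occurrences disagree at position `j + p`. The probability factorises over positions: a hole
contributes `1` and each of the `2m` defined letters contributes `1/2`.
-/

open scoped Classical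

/-- `w` occurs in `z` at position `i` (0-indexed) as a contiguous substring. -/
def OccursAt {α : Type*} (z w : List α) (i : ℕ) : Prop :=
  i + w.length ≤ z.length ∧ (z.drop i).take w.length = w

/-- A pair of words `(x, y)` is nonoverlapping if no string `z` with
`|z| < |x| + |y|` contains an occurrence of `x` and a (different, if `x = y`)
occurrence of `y`. -/
def PairNonoverlapping {α : Type*} (x y : List α) : Prop :=
  ¬ ∃ (z : List α) (i j : ℕ), z.length < x.length + y.length ∧
    OccursAt z x i ∧ OccursAt z y j ∧ (x ≠ y ∨ i ≠ j)

def SetNonoverlapping {α : Type*} (S : Set (List α)) : Prop :=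
  ∀ x ∈ S, ∀ y ∈ S, PairNonoverlapping x y

/-- `w'` is a realization of the partial word `w` (letters `some a`, wildcard
`none` = `?`): same length and agreement at all non-wildcard positions. -/
def Realizes {α : Type*} (w : List (Option α)) (w' : List α) : Prop :=
  List.Forall₂ (fun o a => ∀ b, o = some b → a = b) w w'

def PartialNonoverlapping {α : Type*} (w : List (Option α)) : Prop :=
  SetNonoverlapping {w' | Realizes w w'}

namespace Realizes

variable {α : Type*} {w : List (Option α)} {x : List α}

theorem length_eq (h : Realizes w x) : x.length = w.length :=
  (List.Forall₂.length_eq h).symm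

theorem getElem?_eq {p : ℕ} {a : α} (h : Realizes w x) (hp : w[p]? = some (some a)) :
    x[p]? = some a := by
  obtain ⟨hlt, hwp⟩ := List.getElem?_eq_some_iff.mp hp
  have hlt' : p < x.length := h.length_eq ▸ hlt
  rw [List.getElem?_eq_getElem hlt']
  exact congrArg some ((List.forall₂_iff_get.mp h).2 p hlt hlt' a hwp)

end Realizes

theorem OccursAt.getElem?_add {α : Type*} {z x : List α} {i p : ℕ} (h : OccursAt z x i)
    (hp : p < x.length) : z[i + p]? = x[p]? := by
  rw [← h.2, List.getElem?_take_of_lt hp, List.getElem?_drop]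

theorem OccursAt.eq_of_length_eq {α : Type*} {z x y : List α} {i : ℕ} (hx : OccursAt z x i)
    (hy : OccursAt z y i) (h : x.length = y.length) : x = y := by
  rw [← hx.2, ← hy.2, h]

def ShiftConflict {α : Type*} (w : List (Option α)) (d : ℕ) : Prop :=
  ∃ p a b, a ≠ b ∧ w[p]? = some (some a) ∧ w[p + d]? = some (some b)

section Nonoverlapping

variable {α : Type*} {w : List (Option α)}

theorem false_of_realizes_of_occursAt_lt (hw : ∀ d, 0 < d → d < w.length → ShiftConflict w d)
    {x y z : List α} {i j : ℕ} (hx : Realizes w x) (hy : Realizes w y)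
    (hz : z.length < x.length + y.length) (hxi : OccursAt z x i) (hyj : OccursAt z y j)
    (hij : i < j) : False := by
  have hxw := hx.length_eq
  have hyw := hy.length_eq
  obtain ⟨p, a, b, hab, hwa, hwb⟩ := hw (j - i) (by omega) (by have := hyj.1; omega)
  have hpd : p + (j - i) < w.length := (List.getElem?_eq_some_iff.mp hwb).1
  have hza : z[j + p]? = some a := by
    rw [hyj.getElem?_add (by omega)]; exact hy.getElem?_eq hwa
  have hzb : z[i + (p + (j - i))]? = some b := by
    rw [hxi.getElem?_add (by omega)]; exact hx.getElem?_eq hwb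
  rw [show i + (p + (j - i)) = j + p by omega, hza] at hzb
  exact hab (Option.some.inj hzb)

theorem partialNonoverlapping_of_forall_shiftConflict
    (hw : ∀ d, 0 < d → d < w.length → ShiftConflict w d) : PartialNonoverlapping w := by
  rintro x (hx : Realizes w x) y (hy : Realizes w y) ⟨z, i, j, hz, hxi, hyj, hne⟩
  rcases lt_trichotomy i j with hij | rfl | hji
  · exact false_of_realizes_of_occursAt_lt hw hx hy hz hxi hyj hij
  · have hxy := hxi.eq_of_length_eq hyj (hx.length_eq.trans hy.length_eq.symm)
    tauto
  · exact false_of_realizes_of_occursAt_lt hw hy hx (by omega) hyj hxi hji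

end Nonoverlapping

theorem realizes_ofFn_iff {α : Type*} {w : List (Option α)} {f : Fin w.length → α} :
    Realizes w (List.ofFn f) ↔ ∀ i : Fin w.length, ∀ a, w[i] = some a → f i = a := by
  rw [Realizes, List.forall₂_iff_get]
  simpa using ⟨fun h i => h i i.2, fun h i hi => h ⟨i, hi⟩⟩

section Probability

variable {α : Type*} [Fintype α] [Nonempty α]

theorem sum_ite_eq_some_imp (o : Option α) :
    ∑ b : α, (if ∀ a, o = some a → b = a then (1 : ℝ) / Fintype.card α else 0)
      = if o.isSome then (1 : ℝ) / Fintype.card α else 1 := by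
  cases o with
  | none => simp
  | some a => simp

theorem sum_ite_realizes_ofFn (w : List (Option α)) :
    (∑ f : Fin w.length → α,
        if Realizes w (List.ofFn f) then ((1 : ℝ) / Fintype.card α) ^ w.length else 0)
      = ((1 : ℝ) / Fintype.card α) ^ w.countP Option.isSome := by
  set c : ℝ := 1 / Fintype.card α
  calc (∑ f : Fin w.length → α, if Realizes w (List.ofFn f) then c ^ w.length else 0)
      = ∑ f : Fin w.length → α, ∏ i : Fin w.length,
          if ∀ a, w[i] = some a → f i = a then c else 0 := by
        simp only [Fintype.prod_ite_zero, Finset.prod_const, Finset.card_univ,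
          Fintype.card_fin, realizes_ofFn_iff]
    _ = ∏ i : Fin w.length, if w[i.1].isSome then c else 1 := by
        rw [← Fintype.prod_sum fun (i : Fin w.length) (b : α) =>
          if ∀ a, w[i] = some a → b = a then c else 0]
        exact Finset.prod_congr rfl fun i _ => sum_ite_eq_some_imp _
    _ = c ^ w.countP Option.isSome := by
        rw [Fin.prod_univ_fun_getElem w fun o => if o.isSome then c else 1, List.prod_map_ite]
        simp [List.countP_eq_length_filter]

end Probability

theorem List.getElem?_flatten_replicate_cons {α : Type*} (a : α) (l : List α) {n k : ℕ}
    (hk : k < n) : ((List.replicate n (a :: l)).flatten)[k * (l.length + 1)]? = some a := by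
  induction k generalizing n with
  | zero =>
    obtain ⟨n, rfl⟩ := Nat.exists_eq_add_one_of_ne_zero (by omega : n ≠ 0)
    simp [List.replicate_succ]
  | succ k ih =>
    obtain ⟨n, rfl⟩ := Nat.exists_eq_add_one_of_ne_zero (by omega : n ≠ 0)
    rw [List.replicate_succ, List.flatten_cons, List.getElem?_append_right (by simp)]
    simpa [Nat.succ_mul] using ih (by omega : k < n)

theorem Nat.exists_mul_mem_Ico {d m : ℕ} (hd : 0 < d) (hdm : d ≤ m * m) :
    ∃ t, 1 ≤ t ∧ t ≤ m ∧ d ≤ t * m ∧ t * m < d + m := by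
  have hm : 0 < m := Nat.pos_of_ne_zero (by rintro rfl; omega)
  have hq : (d - 1) / m < m := (Nat.div_lt_iff_lt_mul hm).mpr (by omega)
  have hdiv := Nat.div_add_mod (d - 1) m
  have hmod := Nat.mod_lt (d - 1) hm
  set q := (d - 1) / m
  set r := (d - 1) % m
  refine ⟨q + 1, le_add_self, hq, ?_, ?_⟩ <;> nlinarith [Nat.sub_add_cancel hd]

def partialWord (m : ℕ) : List (Option Bool) :=
  List.replicate m (some false)
    ++ (List.replicate (m - 1) ((some true) :: List.replicate (m - 1) none)).flatten
    ++ [some true]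

theorem length_partialWord (m : ℕ) : (partialWord m).length = m ^ 2 + 1 := by
  rcases m with _ | m
  · rfl
  · simp only [partialWord, Nat.add_sub_cancel, List.length_append, List.length_replicate,
      List.length_flatten, List.map_replicate, List.length_cons, List.sum_replicate, smul_eq_mul,
      List.length_nil]
    ring

theorem countP_isSome_partialWord {m : ℕ} (hm : 1 ≤ m) :
    (partialWord m).countP Option.isSome = 2 * m := by
  simp only [partialWord, List.countP_append, List.countP_replicate, List.countP_flatten,
    List.map_replicate, List.countP_cons, List.countP_nil, List.sum_replicate, Option.isSome_some,
    Option.isSome_none, Bool.false_eq_true, if_true, if_false, smul_eq_mul]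
  omega

theorem getElem?_partialWord_of_lt {m i : ℕ} (hi : i < m) :
    (partialWord m)[i]? = some (some false) := by
  rw [partialWord, List.append_assoc, List.getElem?_append_left (by simpa using hi)]
  simp [hi]

theorem getElem?_partialWord_mul {m t : ℕ} (ht : 1 ≤ t) (htm : t ≤ m) :
    (partialWord m)[t * m]? = some (some true) := by
  obtain ⟨n, rfl⟩ : ∃ n, m = n + 1 := ⟨m - 1, by omega⟩
  have hprefix : (List.replicate (n + 1) (some false)
      ++ (List.replicate n ((some true) :: List.replicate n none)).flatten).length
      = (n + 1) * (n + 1) := by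
    simp only [List.length_append, List.length_replicate, List.length_flatten,
      List.map_replicate, List.length_cons, List.sum_replicate, smul_eq_mul]
    ring
  rw [partialWord, Nat.add_sub_cancel]
  rcases htm.lt_or_eq with htm | rfl
  · obtain ⟨k, rfl⟩ : ∃ k, t = k + 1 := ⟨t - 1, by omega⟩
    rw [List.getElem?_append_left (by rw [hprefix]; nlinarith),
      List.getElem?_append_right (by simp)]
    simpa [Nat.add_mul] using
      List.getElem?_flatten_replicate_cons (some true) (List.replicate n none) (by omega : k < n)
  · rw [List.getElem?_append_right hprefix.le, hprefix, Nat.sub_self]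
    rfl

theorem shiftConflict_partialWord {m d : ℕ} (hd : 0 < d) (hdw : d < (partialWord m).length) :
    ShiftConflict (partialWord m) d := by
  rw [length_partialWord, sq] at hdw
  obtain ⟨t, ht, htm, hdt, htd⟩ := Nat.exists_mul_mem_Ico (m := m) hd (by omega)
  refine ⟨t * m - d, false, true, Bool.false_ne_true, getElem?_partialWord_of_lt (by omega), ?_⟩
  rw [Nat.sub_add_cancel hdt]
  exact getElem?_partialWord_mul ht htm

theorem partialNonoverlapping_partialWord (m : ℕ) : PartialNonoverlapping (partialWord m) :=
  partialNonoverlapping_of_forall_shiftConflict fun _ hd hdw => shiftConflict_partialWord hd hdw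

/-- For `m ≥ 1`, the binary partial word `w(m) = 0^m (1 ?^(m-1))^(m-1) 1` is
nonoverlapping, has length `m² + 1`, and under the fair-coin measure the sum of
the probabilities of its realizations equals `2^(-2m)`. -/
theorem stmt11 (m : ℕ) (hm : 1 ≤ m)
    (w : List (Option Bool))
    (hw : w = List.replicate m (some false)
        ++ (List.replicate (m - 1)
              ((some true) :: List.replicate (m - 1) (none : Option Bool))).flatten
        ++ [some true]) :
    PartialNonoverlapping w ∧ w.length = m ^ 2 + 1 ∧
      (∑ f : Fin w.length → Bool,
        if Realizes w (List.ofFn f) then ((1 : ℝ) / 2) ^ w.length else 0)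
        = ((1 : ℝ) / 2) ^ (2 * m) := by
  obtain rfl : w = partialWord m := hw
  refine ⟨partialNonoverlapping_partialWord m, length_partialWord m, ?_⟩
  have hsum := sum_ite_realizes_ofFn (partialWord m)
  rw [countP_isSome_partialWord hm] at hsum
  simpa using hsum
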